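/- arXiv:2105.12642 — 2 statements merged into one kernel-verified Lean document; each statement's English description precedes it below -/
import Mathlib

section
/- Suppose a graded ring quotient argument: let R = ℚ[z₁,…,z_d]/(z₁²,…,z_d²) and let T be a quotient ring of R by a homogeneous ideal K. If the d elements γ_i = z₁⋯ẑ_i⋯z_d (product omitting z_i) have ℚ-linearly independent images in T, then K is contained in the ideal generated by z₁⋯z_d; equivalently T ≅ ℚ[z₁,…,z_d]/(z₁²,…,z_d², z₁⋯z_d) or T ≅ R. -/
/-!
Modulo the squares `Xᵢ²` a polynomial is determined by its squarefree coefficients, and in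
degree `d - 1` the only squarefree monomials are the `γₖ`; so a homogeneous element of `K` of
degree `d - 1` is congruent to `∑ₖ cₖ γₖ` with `cₖ` its `γₖ`-coefficient, and linear
independence of the `γₖ` in the quotient forces every `cₖ = 0`. If `f ∈ K` is homogeneous of
lower degree with a nonzero squarefree coefficient at `X^S`, pick `i ∉ S`; multiplying `f` by
the variables outside `S ∪ {i}` gives an element of `K` of degree `d - 1` whose
`γᵢ`-coefficient is that of `X^S` in `f`, a contradiction.
-/

open MvPolynomial Finset

noncomputable section

namespace MvPolynomial

variable {σ R : Type*}

section Squares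

variable (σ R) [CommSemiring R]

def squaresIdeal : Ideal (MvPolynomial σ R) :=
  Ideal.span (Set.range fun i => X i ^ 2)

variable {σ R}

theorem mem_squaresIdeal_iff {f : MvPolynomial σ R} :
    f ∈ squaresIdeal σ R ↔ ∀ m : σ →₀ ℕ, (∀ i, m i ≤ 1) → coeff m f = 0 := by
  have : squaresIdeal σ R =
      Ideal.span ((fun s => monomial s (1 : R)) '' Set.range fun i => Finsupp.single i 2) := by
    simp only [squaresIdeal, ← Set.range_comp, Function.comp_def, X_pow_eq_monomial]
  rw [this, mem_ideal_span_monomial_image]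
  simp only [Set.exists_range_iff, Finsupp.single_le_iff, mem_support_iff]
  refine ⟨fun h m hm => by_contra fun hc => ?_, fun h m hm => by_contra fun hc => ?_⟩
  · obtain ⟨i, hi⟩ := h m hc
    have := hm i
    omega
  · push Not at hc
    exact hm (h m fun i => by have := hc i; omega)

end Squares

section IndicatorExp

def indicatorExp (A : Finset σ) : σ →₀ ℕ := ∑ j ∈ A, Finsupp.single j 1

theorem indicatorExp_apply [DecidableEq σ] (A : Finset σ) (k : σ) :
    indicatorExp A k = if k ∈ A then 1 else 0 := by
  simp [indicatorExp, Finsupp.finsetSum_apply, Finsupp.single_apply]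

@[simp]
theorem support_indicatorExp (A : Finset σ) : (indicatorExp A).support = A := by
  classical
  ext k
  simp [indicatorExp_apply]

theorem degree_indicatorExp (A : Finset σ) : (indicatorExp A).degree = #A := by
  simp [indicatorExp]

theorem indicatorExp_injective : Function.Injective (indicatorExp : Finset σ → σ →₀ ℕ) :=
  fun A B h => by rw [← support_indicatorExp A, h, support_indicatorExp]

theorem indicatorExp_union [DecidableEq σ] {A B : Finset σ} (h : Disjoint A B) :
    indicatorExp (A ∪ B) = indicatorExp A + indicatorExp B :=
  sum_union h

theorem eq_indicatorExp_support {m : σ →₀ ℕ} (hm : ∀ i, m i ≤ 1) :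
    m = indicatorExp m.support := by
  classical
  ext k
  have := hm k
  simp only [indicatorExp_apply, Finsupp.mem_support_iff]
  split_ifs <;> omega

theorem prod_X_eq_monomial_indicatorExp [CommSemiring R] (A : Finset σ) :
    (∏ j ∈ A, X j : MvPolynomial σ R) = monomial (indicatorExp A) 1 := by
  simp only [indicatorExp, monomial_sum_one, X]

theorem exists_eq_indicatorExp_erase [DecidableEq σ] [Fintype σ] {m : σ →₀ ℕ}
    (hm : ∀ i, m i ≤ 1) (hdeg : m.degree + 1 = Fintype.card σ) :
    ∃ k, m = indicatorExp (univ.erase k) := by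
  rw [eq_indicatorExp_support hm, degree_indicatorExp] at hdeg
  have hcompl : #m.supportᶜ = 1 := by rw [card_compl]; omega
  obtain ⟨k, hk⟩ := card_eq_one.mp hcompl
  exact ⟨k, by rw [eq_indicatorExp_support hm, ← compl_singleton, ← hk, compl_compl]⟩

theorem coeff_indicatorExp_erase_prod_X [DecidableEq σ] [Fintype σ] [CommSemiring R]
    (k l : σ) :
    coeff (indicatorExp (univ.erase k)) (∏ j ∈ univ.erase l, X j : MvPolynomial σ R) =
      if k = l then 1 else 0 := by
  simp only [prod_X_eq_monomial_indicatorExp, coeff_monomial, indicatorExp_injective.eq_iff,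
    erase_inj _ (mem_univ l), eq_comm]

end IndicatorExp

section Expansion

variable [DecidableEq σ] [Fintype σ] [CommRing R]

theorem sub_sum_coeff_smul_prod_X_erase_mem_squaresIdeal {n : ℕ} (hn : n + 1 = Fintype.card σ)
    {g : MvPolynomial σ R} (hg : g.IsHomogeneous n) :
    g - ∑ k, coeff (indicatorExp (univ.erase k)) g •
        ∏ j ∈ univ.erase k, (X j : MvPolynomial σ R) ∈ squaresIdeal σ R := by
  refine mem_squaresIdeal_iff.mpr fun m hm => ?_
  by_cases hm' : ∃ k, m = indicatorExp (univ.erase k)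
  · obtain ⟨k, rfl⟩ := hm'
    simp [coeff_sum, coeff_indicatorExp_erase_prod_X]
  · have hg0 : coeff m g = 0 := by
      refine by_contra fun h => hm' (exists_eq_indicatorExp_erase hm ?_)
      rw [← hn, ← hg h, Finsupp.degree_eq_weight_one]
      rfl
    push Not at hm'
    simp [coeff_sum, prod_X_eq_monomial_indicatorExp, coeff_monomial, hg0, Ne.symm (hm' _)]

variable {K : Ideal (MvPolynomial σ R)}

theorem coeff_indicatorExp_erase_eq_zero_of_mem (hJK : squaresIdeal σ R ≤ K)
    (hind : LinearIndependent R
      fun i => Ideal.Quotient.mk K (∏ j ∈ univ.erase i, (X j : MvPolynomial σ R)))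
    {n : ℕ} (hn : n + 1 = Fintype.card σ) {g : MvPolynomial σ R} (hgK : g ∈ K)
    (hg : g.IsHomogeneous n) (k : σ) :
    coeff (indicatorExp (univ.erase k)) g = 0 := by
  set s := ∑ k, coeff (indicatorExp (univ.erase k)) g •
    ∏ j ∈ univ.erase k, (X j : MvPolynomial σ R)
  have hs : s ∈ K := by
    simpa using K.sub_mem hgK (hJK (sub_sum_coeff_smul_prod_X_erase_mem_squaresIdeal hn hg))
  refine Fintype.linearIndependent_iff.mp hind
    (fun k => coeff (indicatorExp (univ.erase k)) g) ?_ k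
  rw [← Ideal.Quotient.eq_zero_iff_mem.mpr hs, map_sum]
  exact sum_congr rfl fun k _ => (map_smul (Ideal.Quotient.mkₐ R K) _ _).symm

theorem mem_squaresIdeal_of_mem_of_isHomogeneous (hJK : squaresIdeal σ R ≤ K)
    (hind : LinearIndependent R
      fun i => Ideal.Quotient.mk K (∏ j ∈ univ.erase i, (X j : MvPolynomial σ R)))
    {ℓ : ℕ} (hℓ : ℓ < Fintype.card σ) {f : MvPolynomial σ R} (hfK : f ∈ K)
    (hf : f.IsHomogeneous ℓ) : f ∈ squaresIdeal σ R := by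
  refine mem_squaresIdeal_iff.mpr fun m hm => by_contra fun hmf => ?_
  set S := m.support
  have hSm : m = indicatorExp S := eq_indicatorExp_support hm
  have hS : #S = ℓ := by
    rw [← degree_indicatorExp, ← hSm, ← hf hmf, Finsupp.degree_eq_weight_one]
    rfl
  obtain ⟨i, -, hi⟩ := exists_mem_notMem_of_card_lt_card (s := S) (t := univ)
    (by rwa [card_univ, hS])
  set T := univ.erase i \ S
  have hST : Disjoint S T := disjoint_sdiff
  have hunion : S ∪ T = univ.erase i :=
    union_sdiff_of_subset fun j hj => mem_erase.mpr ⟨ne_of_mem_of_not_mem hj hi, mem_univ j⟩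
  have hT : ℓ + #T + 1 = Fintype.card σ := by
    have := card_union_of_disjoint hST
    rw [hunion, card_erase_of_mem (mem_univ i), card_univ, hS] at this
    omega
  have hg : (f * ∏ j ∈ T, X j).IsHomogeneous (ℓ + #T) :=
    hf.mul (by simpa using IsHomogeneous.prod T _ _ fun j _ => isHomogeneous_X R j)
  have := coeff_indicatorExp_erase_eq_zero_of_mem hJK hind hT (K.mul_mem_right _ hfK) hg i
  rw [← hunion, indicatorExp_union hST, prod_X_eq_monomial_indicatorExp, coeff_mul_monomial,
    mul_one, ← hSm] at this
  exact hmf this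

end Expansion

end MvPolynomial

end

theorem homogeneous_ideal_low_degree_zero_general (d : ℕ)
    (K : Ideal (MvPolynomial (Fin d) ℚ))
    (hJK : Ideal.span (Set.range fun i : Fin d => (X i : MvPolynomial (Fin d) ℚ) ^ 2) ≤ K)
    (hind : LinearIndependent ℚ
      (fun i : Fin d => Ideal.Quotient.mk K (∏ j ∈ Finset.univ.erase i, (X j : MvPolynomial (Fin d) ℚ)))) :
    ∀ ℓ : ℕ, ℓ < d - 1 → ∀ f ∈ K, f.IsHomogeneous ℓ →
      f ∈ Ideal.span (Set.range fun i : Fin d => (X i : MvPolynomial (Fin d) ℚ) ^ 2) :=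
  fun _ hℓ _ hfK hf =>
    mem_squaresIdeal_of_mem_of_isHomogeneous hJK hind (by rw [Fintype.card_fin]; omega) hfK hf

/-- Let R = ℚ[z₁,…,z_d]/(z₁²,…,z_d²) and let K be a homogeneous ideal with K ∩ R₀ = 0,
presented by an ideal K of ℚ[z₁,…,z_d] containing the squares and stable under taking
homogeneous components.  If the images of the γ_i = z₁⋯ẑ_i⋯z_d in R/K are ℚ-linearly
independent, then every homogeneous element of K of degree ℓ < d − 1 is zero in R,
i.e. lies in (z₁²,…,z_d²). -/
theorem homogeneous_ideal_low_degree_zero (d : ℕ) (hd : 2 ≤ d)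
    (K : Ideal (MvPolynomial (Fin d) ℚ))
    (hJK : Ideal.span (Set.range fun i : Fin d => (X i : MvPolynomial (Fin d) ℚ) ^ 2) ≤ K)
    (hhom : ∀ f ∈ K, ∀ n : ℕ, homogeneousComponent n f ∈ K)
    (hK0 : ∀ f ∈ K, f.IsHomogeneous 0 → f = 0)
    (hind : LinearIndependent ℚ
      (fun i : Fin d => Ideal.Quotient.mk K (∏ j ∈ Finset.univ.erase i, (X j : MvPolynomial (Fin d) ℚ)))) :
    ∀ ℓ : ℕ, ℓ < d - 1 → ∀ f ∈ K, f.IsHomogeneous ℓ →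
      f ∈ Ideal.span (Set.range fun i : Fin d => (X i : MvPolynomial (Fin d) ℚ) ^ 2) :=
  homogeneous_ideal_low_degree_zero_general d K hJK hind
end

section
/- Let d ≥ 2 and R = ℚ[z₁,…,z_d]/(z₁²,…,z_d²). Suppose K is a homogeneous ideal of R such that the images of γ_i = z₁⋯ẑ_i⋯z_d (i = 1,…,d) in R/K are ℚ-linearly independent. Then for every ℓ < d and every degree-ℓ homogeneous element x ∈ K that is a ℚ-linear combination of squarefree monomials z_I with |I| = ℓ and I a proper subset, x = 0. -/
/-!
Let `x = ∑ a_I z_I ∈ K` and `a_{I₀} ≠ 0`; pick `i ∉ I₀` and put `E = I₀ ∪ {i}`. Modulo the squares,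
multiplying by `z_{Eᶜ}` kills every `z_I` with `I ⊄ E`, and since `|I| = |E| - 1` the surviving
monomials are the `z_{E ∖ {j}}`, which become `γ_j`. Hence `∑_{j ∈ E} a_{E ∖ {j}} γ_j ∈ K`, and linear
independence of the `γ_j` modulo `K` gives `a_{I₀} = a_{E ∖ {i}} = 0`.
-/

open Finset

theorem Finset.prod_erase_mul_prod_compl {α M : Type*} [Fintype α] [DecidableEq α] [CommMonoid M]
    (f : α → M) {E : Finset α} {j : α} (hj : j ∈ E) :
    (∏ i ∈ E.erase j, f i) * ∏ i ∈ Eᶜ, f i = ∏ i ∈ univ.erase j, f i := by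
  rw [← union_compl E, erase_union_distrib, erase_eq_of_notMem (notMem_compl.2 hj),
    prod_union (disjoint_compl_right.mono_left (erase_subset j E))]

theorem Finset.mem_image_erase_of_subset {α : Type*} [DecidableEq α] {I E : Finset α}
    (hIE : I ⊆ E) (hcard : #I + 1 = #E) : I ∈ E.image E.erase := by
  obtain ⟨j, hjI, rfl⟩ := exists_eq_insert_iff.2 ⟨hIE, hcard⟩
  exact mem_image.2 ⟨j, mem_insert_self j I, erase_insert hjI⟩

namespace MvPolynomial

variable {σ k : Type*}

theorem prod_X_mul_prod_X_mem_span_X_sq [CommSemiring k] [DecidableEq σ] {I J : Finset σ}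
    (h : ¬Disjoint I J) :
    (∏ i ∈ I, X i : MvPolynomial σ k) * ∏ i ∈ J, X i ∈
      Ideal.span (Set.range fun i => (X i : MvPolynomial σ k) ^ 2) := by
  obtain ⟨j, hjI, hjJ⟩ := not_disjoint_iff.mp h
  rw [← mul_prod_erase _ _ hjI, ← mul_prod_erase _ _ hjJ]
  have hsplit : (X j * ∏ i ∈ I.erase j, X i) * (X j * ∏ i ∈ J.erase j, X i) =
      (X j : MvPolynomial σ k) ^ 2 * ((∏ i ∈ I.erase j, X i) * ∏ i ∈ J.erase j, X i) := by
    ring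
  rw [hsplit]
  exact Ideal.mul_mem_right _ _ (Ideal.subset_span ⟨j, rfl⟩)

variable [Fintype σ] [DecidableEq σ] [CommRing k]

theorem sum_mul_prod_X_compl_sub_mem_span_X_sq (a : Finset σ → k) {ℓ : ℕ}
    (ha : ∀ I, a I ≠ 0 → #I = ℓ) {E : Finset σ} (hE : #E = ℓ + 1) :
    (∑ I, C (a I) * ∏ i ∈ I, X i) * ∏ i ∈ Eᶜ, X i -
        ∑ j ∈ E, C (a (E.erase j)) * ∏ i ∈ univ.erase j, X i ∈
      Ideal.span (Set.range fun i => (X i : MvPolynomial σ k) ^ 2) := by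
  rw [sum_mul, ← sum_add_sum_compl (E.image E.erase), sum_image (erase_injOn E)]
  have hsurvivors : ∑ j ∈ E, C (a (E.erase j)) * (∏ i ∈ E.erase j, X i) * ∏ i ∈ Eᶜ, X i =
      ∑ j ∈ E, C (a (E.erase j)) * ∏ i ∈ univ.erase j, (X i : MvPolynomial σ k) :=
    sum_congr rfl fun j hj => by rw [mul_assoc, prod_erase_mul_prod_compl _ hj]
  rw [hsurvivors, add_sub_cancel_left]
  refine Ideal.sum_mem _ fun I hI => ?_
  by_cases haI : a I = 0
  · simp [haI]
  have hIE : ¬I ⊆ E := fun hIE =>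
    mem_compl.1 hI (mem_image_erase_of_subset hIE (by rw [ha I haI, hE]))
  rw [mul_assoc]
  exact Ideal.mul_mem_left _ _
    (prod_X_mul_prod_X_mem_span_X_sq (mt disjoint_compl_right_iff.1 hIE))

theorem coeff_erase_eq_zero_of_linearIndependent {K : Ideal (MvPolynomial σ k)}
    (hK : Ideal.span (Set.range fun i => (X i : MvPolynomial σ k) ^ 2) ≤ K)
    (hind : LinearIndependent k fun i => Ideal.Quotient.mk K (∏ j ∈ univ.erase i, X j))
    (a : Finset σ → k) {ℓ : ℕ} (ha : ∀ I, a I ≠ 0 → #I = ℓ)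
    (hx : ∑ I, C (a I) * ∏ i ∈ I, X i ∈ K) {E : Finset σ} (hE : #E = ℓ + 1) {j : σ}
    (hj : j ∈ E) : a (E.erase j) = 0 := by
  have hmem : ∑ j ∈ E, C (a (E.erase j)) * ∏ i ∈ univ.erase j, X i ∈ K :=
    (Submodule.sub_mem_iff_right _ (K.mul_mem_right _ hx)).1
      (hK (sum_mul_prod_X_compl_sub_mem_span_X_sq a ha hE))
  refine linearIndependent_iff'.mp hind E (fun j => a (E.erase j)) ?_ j hj
  have hzero := Ideal.Quotient.eq_zero_iff_mem.2 hmem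
  simpa only [C_mul', map_sum, ← Ideal.Quotient.mkₐ_eq_mk k, map_smul] using hzero

end MvPolynomial

open MvPolynomial

theorem homogeneous_ideal_squarefree_zero_general (d : ℕ)
    (K : Ideal (MvPolynomial (Fin d) ℚ))
    (hJK : Ideal.span (Set.range fun i : Fin d => (X i : MvPolynomial (Fin d) ℚ) ^ 2) ≤ K)
    (hind : LinearIndependent ℚ
      (fun i : Fin d => Ideal.Quotient.mk K (∏ j ∈ Finset.univ.erase i, (X j : MvPolynomial (Fin d) ℚ))))
    (ℓ : ℕ) (a : Finset (Fin d) → ℚ)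
    (ha : ∀ I : Finset (Fin d), a I ≠ 0 → I.card = ℓ ∧ I ≠ Finset.univ)
    (hx : (∑ I : Finset (Fin d), C (a I) * ∏ i ∈ I, (X i : MvPolynomial (Fin d) ℚ)) ∈ K) :
    (∑ I : Finset (Fin d), C (a I) * ∏ i ∈ I, (X i : MvPolynomial (Fin d) ℚ)) ∈
      Ideal.span (Set.range fun i : Fin d => (X i : MvPolynomial (Fin d) ℚ) ^ 2) := by
  suffices h : ∀ I, a I = 0 by simp [h]
  intro I₀
  by_contra hne
  obtain ⟨hcard, hI₀⟩ := ha I₀ hne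
  obtain ⟨i, hi⟩ : ∃ i, i ∉ I₀ := by simpa [eq_univ_iff_forall] using hI₀
  have hcoeff := coeff_erase_eq_zero_of_linearIndependent hJK hind a (fun I h => (ha I h).1) hx
    (E := insert i I₀) (by rw [card_insert_of_notMem hi, hcard]) (mem_insert_self i I₀)
  rw [erase_insert hi] at hcoeff
  exact hne hcoeff

/-- Let R = ℚ[z₁,…,z_d]/(z₁²,…,z_d²) and K a homogeneous ideal (presented by an ideal of
ℚ[z₁,…,z_d] containing the squares and stable under homogeneous components) such that the
images of the γ_i = z₁⋯ẑ_i⋯z_d in R/K are ℚ-linearly independent.  Then for every ℓ < d,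
every element of K which is a ℚ-linear combination of squarefree monomials z_I with |I| = ℓ
and I a proper subset is zero in R, i.e. lies in (z₁²,…,z_d²). -/
theorem homogeneous_ideal_squarefree_zero (d : ℕ) (hd : 2 ≤ d)
    (K : Ideal (MvPolynomial (Fin d) ℚ))
    (hJK : Ideal.span (Set.range fun i : Fin d => (X i : MvPolynomial (Fin d) ℚ) ^ 2) ≤ K)
    (hhom : ∀ f ∈ K, ∀ n : ℕ, homogeneousComponent n f ∈ K)
    (hind : LinearIndependent ℚ
      (fun i : Fin d => Ideal.Quotient.mk K (∏ j ∈ Finset.univ.erase i, (X j : MvPolynomial (Fin d) ℚ))))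
    (ℓ : ℕ) (hℓ : ℓ < d) (a : Finset (Fin d) → ℚ)
    (ha : ∀ I : Finset (Fin d), a I ≠ 0 → I.card = ℓ ∧ I ≠ Finset.univ)
    (hx : (∑ I : Finset (Fin d), C (a I) * ∏ i ∈ I, (X i : MvPolynomial (Fin d) ℚ)) ∈ K) :
    (∑ I : Finset (Fin d), C (a I) * ∏ i ∈ I, (X i : MvPolynomial (Fin d) ℚ)) ∈
      Ideal.span (Set.range fun i : Fin d => (X i : MvPolynomial (Fin d) ℚ) ^ 2) :=
  homogeneous_ideal_squarefree_zero_general d K hJK hind ℓ a ha hx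
end
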